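/- arXiv:0807.3578 — 4 statements merged into one kernel-verified Lean document; each statement's English description precedes it below -/
import Mathlib

section
/- Suppose a, b, c, d ∈ ℂ[X] are nonconstant and satisfy a ∘ b = c ∘ d. Then: (1) if deg c divides deg a, then a = c ∘ â for some â ∈ ℂ[X]; (2) if deg d divides deg b, then b = b̂ ∘ d for some b̂ ∈ ℂ[X]; (3) if deg a = deg c, then there is a linear ℓ ∈ ℂ[X] such that a = c ∘ ℓ and b = ℓ^{-1} ∘ d. -/
/-!
Reduce `b` modulo `ℂ[d]`: choose `p` for which `r = b - p ∘ d` has least degree. Cancelling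
leading terms shows that `deg d ∤ deg r` unless `r = 0`, so if `deg d ∣ deg b` then `deg r < deg b`.
Now `a ∘ b - a ∘ (p ∘ d) = (c - a ∘ p) ∘ d` has degree divisible by `deg d`. On the other hand
`a ∘ u - a ∘ v = (u - v) · Q` where, when `deg (u - v) < deg v`, the quotient `Q` equals `a' ∘ v`
up to terms of lower degree; in characteristic zero this gives degree
`(deg a - 1) · deg b + deg r`, which forces `deg d ∣ deg r`, so `r = 0`. This is (2); (1) is (2)
for the equation read backwards followed by right cancellation of `b`, and (3) is (2) with a
linear quotient.
-/

open Polynomial Finset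

namespace Polynomial

section CommRing

variable {R : Type*} [CommRing R]

noncomputable def compDivDiff (a u v : R[X]) : R[X] :=
  a.sum fun i c => C c * ∑ j ∈ range i, u ^ j * v ^ (i - 1 - j)

theorem comp_sub_comp_eq_mul_compDivDiff (a u v : R[X]) :
    a.comp u - a.comp v = (u - v) * compDivDiff a u v := by
  rw [comp, comp, eval₂_eq_sum, eval₂_eq_sum, compDivDiff, Polynomial.sum_def,
    Polynomial.sum_def, Polynomial.sum_def, ← sum_sub_distrib, mul_sum]
  refine sum_congr rfl fun i _ => ?_
  rw [← mul_sub, ← geom_sum₂_mul]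
  ring

theorem derivative_comp_eq_sum (a v : R[X]) :
    (derivative a).comp v = a.sum fun i c => C c * (i * v ^ (i - 1)) := by
  simp only [derivative_apply, Polynomial.sum_def, Polynomial.sum_comp, mul_comp, C_comp,
    X_pow_comp, C_mul, C_eq_natCast, natCast_comp, mul_assoc]

theorem compDivDiff_sub_derivative_comp (a u v : R[X]) :
    compDivDiff a u v - (derivative a).comp v =
      a.sum fun i c => C c * ∑ j ∈ range i, (u ^ j * v ^ (i - 1 - j) - v ^ (i - 1)) := by
  simp only [derivative_comp_eq_sum, compDivDiff, Polynomial.sum_def, ← sum_sub_distrib,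
    ← mul_sub, sum_sub_distrib (s := range _), sum_const, card_range, nsmul_eq_mul]

variable [IsDomain R]

theorem degree_pow_mul_pow_sub_pow_lt {u v : R[X]} (hv : v ≠ 0) (hdeg : u.degree = v.degree)
    (hlc : u.leadingCoeff = v.leadingCoeff) (j k : ℕ) :
    (u ^ j * v ^ k - v ^ (j + k)).degree < (v ^ (j + k)).degree := by
  refine degree_sub_lt_right ?_ (pow_ne_zero _ hv) ?_
  · rw [degree_mul, degree_pow, degree_pow, degree_pow, hdeg, ← add_nsmul]
  · rw [leadingCoeff_mul, leadingCoeff_pow, leadingCoeff_pow, leadingCoeff_pow, hlc, pow_add]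

theorem degree_compDivDiff_sub_derivative_comp_lt {a u v : R[X]}
    (h : (u - v).degree < v.degree) :
    (compDivDiff a u v - (derivative a).comp v).degree <
      ((a.natDegree - 1) * v.natDegree : ℕ) := by
  have hv : v ≠ 0 := by rintro rfl; simp at h
  have hdeg : u.degree = v.degree := by
    rw [← sub_add_cancel u v, degree_add_eq_right_of_degree_lt h]
  have hlc : u.leadingCoeff = v.leadingCoeff := by
    rw [← sub_add_cancel u v, leadingCoeff_add_of_degree_lt h]
  rw [compDivDiff_sub_derivative_comp, Polynomial.sum_def, ← mem_degreeLT]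
  refine Submodule.sum_mem _ fun i hi => ?_
  rw [← smul_eq_C_mul]
  refine Submodule.smul_mem _ _ (Submodule.sum_mem _ fun j hj => ?_)
  have hji : j + (i - 1 - j) = i - 1 := by have := mem_range.mp hj; omega
  rw [mem_degreeLT]
  calc _ < (v ^ (i - 1)).degree := by
        have := degree_pow_mul_pow_sub_pow_lt hv hdeg hlc j (i - 1 - j)
        rwa [hji] at this
    _ ≤ _ := degree_le_of_natDegree_le <| natDegree_pow_le.trans <|
      Nat.mul_le_mul_right _ (Nat.sub_le_sub_right (le_natDegree_of_mem_supp i hi) 1)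

theorem derivative_comp_ne_zero [IsAddTorsionFree R] {a v : R[X]} (ha : 0 < a.natDegree)
    (hv : 0 < v.natDegree) : (derivative a).comp v ≠ 0 := by
  intro h
  rcases comp_eq_zero_iff.1 h with h' | ⟨-, h'⟩
  · exact ha.ne' (derivative_eq_zero.1 h')
  · exact hv.ne' (by rw [h', natDegree_C])

theorem natDegree_comp_sub_comp [IsAddTorsionFree R] {a u v : R[X]} (ha : 0 < a.natDegree)
    (huv : u ≠ v) (h : (u - v).degree < v.degree) :
    (a.comp u - a.comp v).natDegree = (a.natDegree - 1) * v.natDegree + (u - v).natDegree := by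
  have huv' : u - v ≠ 0 := sub_ne_zero.2 huv
  have hv : 0 < v.natDegree := (Nat.zero_le _).trans_lt (natDegree_lt_natDegree huv' h)
  have hder := derivative_comp_ne_zero ha hv
  have hlt :
      (compDivDiff a u v - (derivative a).comp v).degree < ((derivative a).comp v).degree := by
    rw [degree_eq_natDegree hder, natDegree_comp, natDegree_derivative]
    exact degree_compDivDiff_sub_derivative_comp_lt h
  have hW : compDivDiff a u v =
      (derivative a).comp v + (compDivDiff a u v - (derivative a).comp v) :=
    (add_sub_cancel _ _).symm
  have hW0 : compDivDiff a u v ≠ 0 := by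
    rw [← degree_ne_bot, hW, degree_add_eq_left_of_degree_lt hlt, degree_ne_bot]
    exact hder
  rw [comp_sub_comp_eq_mul_compDivDiff, natDegree_mul huv' hW0, hW,
    natDegree_add_eq_left_of_degree_lt hlt, natDegree_comp, natDegree_derivative, add_comm]

theorem comp_injective {d : R[X]} (hd : 0 < d.natDegree) :
    Function.Injective fun p : R[X] => p.comp d := by
  intro p q h
  have hpq : (p - q).comp d = 0 := by rw [sub_comp]; exact sub_eq_zero.2 h
  rcases comp_eq_zero_iff.1 hpq with h' | ⟨-, h'⟩
  · exact sub_eq_zero.1 h'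
  · exact absurd (by rw [h', natDegree_C]) hd.ne'

end CommRing

section Field

variable {K : Type*} [Field K]

theorem exists_degree_sub_comp_lt {d r : K[X]} (hd : d ≠ 0) (hr : r ≠ 0)
    (h : d.natDegree ∣ r.natDegree) : ∃ q : K[X], (r - q.comp d).degree < r.degree := by
  obtain ⟨k, hk⟩ := h
  have hlc : d.leadingCoeff ^ k ≠ 0 := pow_ne_zero _ (leadingCoeff_ne_zero.2 hd)
  have hc : r.leadingCoeff / d.leadingCoeff ^ k ≠ 0 :=
    div_ne_zero (leadingCoeff_ne_zero.2 hr) hlc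
  refine ⟨C (r.leadingCoeff / d.leadingCoeff ^ k) * X ^ k, degree_sub_lt_left ?_ hr ?_⟩
  · rw [mul_comp, C_comp, X_pow_comp, degree_C_mul hc, degree_pow, degree_eq_natDegree hd,
      degree_eq_natDegree hr, hk, nsmul_eq_mul, Nat.cast_mul, mul_comm]
  · rw [mul_comp, C_comp, X_pow_comp, leadingCoeff_mul, leadingCoeff_C, leadingCoeff_pow,
      div_mul_cancel₀ _ hlc]

theorem exists_sub_comp_eq_zero_or_not_dvd {d : K[X]} (hd : d ≠ 0) (b : K[X]) :
    ∃ p : K[X], (b - p.comp d).degree ≤ b.degree ∧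
      (b = p.comp d ∨ ¬ d.natDegree ∣ (b - p.comp d).natDegree) := by
  let p := Function.argmin fun p : K[X] => (b - p.comp d).degree
  refine ⟨p, by simpa using Function.argmin_le (fun p : K[X] => (b - p.comp d).degree) 0, ?_⟩
  by_contra! ⟨hne, hdvd⟩
  obtain ⟨q, hq⟩ := exists_degree_sub_comp_lt hd (sub_ne_zero.2 hne) hdvd
  refine Function.not_lt_argmin (fun p : K[X] => (b - p.comp d).degree) (p + q) ?_
  simpa only [add_comp, sub_add_eq_sub_sub] using hq

theorem exists_comp_eq_X_of_natDegree_eq_one {ℓ : K[X]} (h : ℓ.natDegree = 1) :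
    ∃ ℓinv : K[X], ℓinv.natDegree = 1 ∧ ℓ.comp ℓinv = X ∧ ℓinv.comp ℓ = X := by
  obtain ⟨e, he, f, rfl⟩ := natDegree_eq_one.1 h
  refine ⟨C e⁻¹ * (X - C f), ?_, ?_, ?_⟩
  · rw [natDegree_C_mul (inv_ne_zero he), natDegree_X_sub_C]
  · simp only [add_comp, mul_comp, C_comp, X_comp]
    rw [← mul_assoc, ← C_mul, mul_inv_cancel₀ he, C_1, one_mul, sub_add_cancel]
  · simp only [mul_comp, C_comp, X_comp, sub_comp, add_sub_cancel_right]
    rw [← mul_assoc, ← C_mul, inv_mul_cancel₀ he, C_1, one_mul]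

theorem exists_eq_comp_of_comp_eq_comp [CharZero K] {a b c d : K[X]} (ha : 0 < a.natDegree)
    (heq : a.comp b = c.comp d) (hdvd : d.natDegree ∣ b.natDegree) : ∃ e : K[X], b = e.comp d := by
  rcases eq_or_ne d.natDegree 0 with hd0 | hd0
  · rw [hd0, zero_dvd_iff] at hdvd
    exact ⟨C (b.coeff 0), by rw [C_comp]; exact eq_C_of_natDegree_eq_zero hdvd⟩
  have hd : d ≠ 0 := by rintro rfl; exact hd0 natDegree_zero
  obtain ⟨p, hle, hp | hndvd⟩ := exists_sub_comp_eq_zero_or_not_dvd hd b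
  · exact ⟨p, hp⟩
  exfalso
  have hr0 : b - p.comp d ≠ 0 := fun h => hndvd (by rw [h, natDegree_zero]; exact dvd_zero _)
  have hlt : (b - p.comp d).degree < b.degree :=
    hle.lt_of_ne fun h => hndvd (natDegree_eq_natDegree h ▸ hdvd)
  have hv : (p.comp d).degree = b.degree := by
    rw [← sub_sub_cancel b (p.comp d), degree_sub_eq_left_of_degree_lt hlt]
  have key := natDegree_comp_sub_comp ha (sub_ne_zero.1 hr0) (hv ▸ hlt)
  rw [heq, ← comp_assoc, ← sub_comp, natDegree_comp, natDegree_eq_natDegree hv] at key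
  exact hndvd <| (Nat.dvd_add_right (dvd_mul_of_dvd_right hdvd _)).1 (key ▸ dvd_mul_left _ _)

end Field

end Polynomial

theorem multiple_degree_divisibility
    (a b c d : ℂ[X])
    (ha : 0 < a.natDegree) (hb : 0 < b.natDegree)
    (hc : 0 < c.natDegree) (hd : 0 < d.natDegree)
    (heq : a.comp b = c.comp d) :
    (c.natDegree ∣ a.natDegree → ∃ ahat : ℂ[X], a = c.comp ahat) ∧
    (d.natDegree ∣ b.natDegree → ∃ bhat : ℂ[X], b = bhat.comp d) ∧
    (a.natDegree = c.natDegree →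
      ∃ ℓ ℓinv : ℂ[X], ℓ.natDegree = 1 ∧
        ℓ.comp ℓinv = Polynomial.X ∧ ℓinv.comp ℓ = Polynomial.X ∧
        a = c.comp ℓ ∧ b = ℓinv.comp d) := by
  have hdeg : a.natDegree * b.natDegree = c.natDegree * d.natDegree := by
    simpa only [natDegree_comp] using congrArg natDegree heq
  refine ⟨fun ⟨t, ht⟩ => ?_, exists_eq_comp_of_comp_eq_comp ha heq, fun hac => ?_⟩
  · have hbd : b.natDegree ∣ d.natDegree :=
      ⟨t, Nat.eq_of_mul_eq_mul_left hc (by rw [← hdeg, ht]; ring)⟩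
    obtain ⟨e, rfl⟩ := exists_eq_comp_of_comp_eq_comp hc heq.symm hbd
    exact ⟨e, comp_injective hb (by dsimp only; rw [heq, comp_assoc])⟩
  · have hbd : b.natDegree = d.natDegree := Nat.eq_of_mul_eq_mul_left ha (hac ▸ hdeg)
    obtain ⟨e, rfl⟩ := exists_eq_comp_of_comp_eq_comp ha heq hbd.symm.dvd
    have he : e.natDegree = 1 :=
      Nat.eq_of_mul_eq_mul_right hd (by rw [← natDegree_comp, hbd, one_mul])
    obtain ⟨einv, heinv, he_einv, heinv_e⟩ := exists_comp_eq_X_of_natDegree_eq_one he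
    have hae : a.comp e = c := comp_injective hd (by dsimp only; rw [comp_assoc, heq])
    exact ⟨einv, e, heinv, heinv_e, he_einv, by rw [← hae, comp_assoc, he_einv, comp_X], rfl⟩
end

section
/- Let J be a set of subgroups of a finite cyclic group I, containing the trivial subgroup and I itself, and closed under intersections and products (joins). Let 1 = A_0 < A_1 < ⋯ < A_r = I and 1 = B_0 < B_1 < ⋯ < B_s = I be two maximal strictly increasing chains of groups in J (maximal in the sense that no member of J lies strictly between two consecutive entries). Then r = s, and one can pass from the first chain to the second via finitely many steps, each of which replaces a maximal chain 1 = C_0 < C_1 < ⋯ < C_r = I of groups in J by a maximal chain 1 = D_0 < D_1 < ⋯ < D_r = I of groups in J with D_i = C_i for all i except a single index j satisfying 0 < j < r. -/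
/-!
Dedekind's argument for chains in a modular lattice, applied to the lattice of subgroups of an
abelian group. Induct on the length. Two maximal chains from `a` begin with covers `b`, `c` of
`a` in `J`. If `b = c`, pass to the tails. Otherwise, by modularity, `b ⊔ c` covers both `b` and
`c` in `J`, so for any maximal chain `P` from `b ⊔ c` the chains `a < b < P` and `a < c < P` are
one step apart, and by induction each of them is connected to the given chain with the same
second entry.
-/

/-- `L` is a maximal strictly increasing chain of subgroups from `⊥` to `⊤`, all of
whose members belong to `Jset`, such that no member of `Jset` lies strictly between
two consecutive entries. -/
def IsMaxChainIn {I : Type*} [Group I] (Jset : Set (Subgroup I))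
    (L : List (Subgroup I)) : Prop :=
  (∀ K ∈ L, K ∈ Jset) ∧ L.head? = some ⊥ ∧ L.getLast? = some ⊤ ∧
    List.Chain' (· < ·) L ∧
    ∀ (i : ℕ) (C C' : Subgroup I), L[i]? = some C → L[i + 1]? = some C' →
      ¬ ∃ K ∈ Jset, C < K ∧ K < C'

/-- One step: replace a maximal chain by another maximal chain of the same length
which differs from it in a single interior position. -/
def ChainStep {I : Type*} [Group I] (Jset : Set (Subgroup I))
    (L M : List (Subgroup I)) : Prop :=
  IsMaxChainIn Jset L ∧ IsMaxChainIn Jset M ∧ L.length = M.length ∧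
    ∃ j : ℕ, 0 < j ∧ j + 1 < L.length ∧ ∀ i : ℕ, i ≠ j → L[i]? = M[i]?

section ModularChains

variable {α : Type*}

def CovByIn [LT α] (J : Set α) (a b : α) : Prop :=
  a < b ∧ ¬ ∃ K ∈ J, a < K ∧ K < b

section Defs

variable [LT α] [Top α] (J : Set α)

/-- `IsMaxChainIn` and `ChainStep` are `IsMaxChainFrom J ⊥` and `ChainStepFrom J ⊥` in
`Subgroup I`; the start is freed so that the induction can pass to the tail of a chain. -/
def IsMaxChainFrom (a : α) (L : List α) : Prop :=
  (∀ K ∈ L, K ∈ J) ∧ L.head? = some a ∧ L.getLast? = some ⊤ ∧ L.IsChain (· < ·) ∧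
    ∀ (i : ℕ) (C C' : α), L[i]? = some C → L[i + 1]? = some C' → ¬ ∃ K ∈ J, C < K ∧ K < C'

def ChainStepFrom (a : α) (L M : List α) : Prop :=
  IsMaxChainFrom J a L ∧ IsMaxChainFrom J a M ∧ L.length = M.length ∧
    ∃ j : ℕ, 0 < j ∧ j + 1 < L.length ∧ ∀ i : ℕ, i ≠ j → L[i]? = M[i]?

end Defs

section PartialOrder

variable [PartialOrder α] {J : Set α} {a b : α}

theorem CovByIn.eq_or_eq (h : CovByIn J a b) {x : α} (hx : x ∈ J) (hax : a ≤ x) (hxb : x ≤ b) :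
    x = a ∨ x = b := by
  by_contra! hne
  exact h.2 ⟨x, hx, lt_of_le_of_ne hax hne.1.symm, lt_of_le_of_ne hxb hne.2⟩

theorem exists_covByIn_of_lt [WellFoundedLT α] (hb : b ∈ J) (hab : a < b) :
    ∃ c ∈ J, CovByIn J a c := by
  obtain ⟨c, ⟨hcJ, hac⟩, hmin⟩ := wellFounded_lt.has_min {K | K ∈ J ∧ a < K} ⟨b, hb, hab⟩
  exact ⟨c, hcJ, hac, fun ⟨K, hKJ, haK, hKc⟩ => hmin K ⟨hKJ, haK⟩ hKc⟩

end PartialOrder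

theorem CovByIn.sup [Lattice α] [IsModularLattice α] {J : Set α} {a b c : α} (hinf : InfClosed J)
    (hb : CovByIn J a b) (hc : CovByIn J a c) (hcJ : c ∈ J) (hbc : b ≠ c) :
    CovByIn J b (b ⊔ c) := by
  refine ⟨left_lt_sup.2 fun hcb => ?_, fun ⟨K, hKJ, hbK, hKbc⟩ => ?_⟩
  · rcases hb.eq_or_eq hcJ hc.1.le hcb with h | h
    · exact hc.1.ne' h
    · exact hbc h.symm
  · rcases hc.eq_or_eq (hinf hcJ hKJ) (le_inf hc.1.le (hb.1.trans hbK).le) inf_le_left with h | h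
    · refine hbK.not_ge ?_
      calc K ≤ (b ⊔ c) ⊓ K := le_inf hKbc.le le_rfl
        _ = b ⊔ c ⊓ K := sup_inf_assoc_of_le c hbK.le
        _ = b := by rw [h, sup_eq_left.2 hb.1.le]
    · exact hKbc.not_ge (sup_le hbK.le (h ▸ inf_le_right))

section Chains

variable [PartialOrder α] [OrderTop α] {J : Set α} {a b c : α} {L M : List α}

theorem IsMaxChainFrom.exists_eq_cons (h : IsMaxChainFrom J a L) : ∃ L', L = a :: L' :=
  List.head?_eq_some_iff.1 h.2.1

theorem isMaxChainFrom_singleton : IsMaxChainFrom J a [a] ↔ a ∈ J ∧ a = ⊤ := by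
  simp [IsMaxChainFrom]

theorem isMaxChainFrom_cons_cons :
    IsMaxChainFrom J a (a :: b :: L) ↔ a ∈ J ∧ CovByIn J a b ∧ IsMaxChainFrom J b (b :: L) := by
  simp only [IsMaxChainFrom, CovByIn, List.forall_mem_cons, List.head?_cons,
    List.getLast?_cons_cons, List.isChain_cons_cons]
  constructor
  · rintro ⟨⟨haJ, hbJ, hLJ⟩, -, hlast, ⟨hab, hchain⟩, hcov⟩
    exact ⟨haJ, ⟨hab, hcov 0 a b rfl rfl⟩, ⟨hbJ, hLJ⟩, trivial, hlast, hchain,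
      fun i => hcov (i + 1)⟩
  · rintro ⟨haJ, ⟨hab, hcovab⟩, ⟨hbJ, hLJ⟩, -, hlast, hchain, hcov⟩
    refine ⟨⟨haJ, hbJ, hLJ⟩, trivial, hlast, ⟨hab, hchain⟩, ?_⟩
    rintro (_ | i) C C' hC hC'
    · simp only [List.getElem?_cons_zero, List.getElem?_cons_succ, Option.some.injEq] at hC hC'
      exact hC ▸ hC' ▸ hcovab
    · exact hcov i C C' hC hC'

theorem IsMaxChainFrom.top_mem (h : IsMaxChainFrom J a L) : ⊤ ∈ J :=
  h.1 ⊤ (List.mem_of_getLast? h.2.2.1)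

theorem IsMaxChainFrom.eq_singleton_top (h : IsMaxChainFrom J ⊤ L) : L = [⊤] := by
  obtain ⟨_ | ⟨b, L⟩, rfl⟩ := h.exists_eq_cons
  · rfl
  · exact absurd (isMaxChainFrom_cons_cons.1 h).2.1.1 not_top_lt

theorem IsMaxChainFrom.exists_eq_cons_cons (h : IsMaxChainFrom J a L) (ha : a ≠ ⊤) :
    ∃ b L', L = a :: b :: L' := by
  obtain ⟨_ | ⟨b, L⟩, rfl⟩ := h.exists_eq_cons
  · exact absurd (isMaxChainFrom_singleton.1 h).2 ha
  · exact ⟨b, L, rfl⟩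

theorem IsMaxChainFrom.cons (h : IsMaxChainFrom J b L) (ha : a ∈ J) (hab : CovByIn J a b) :
    IsMaxChainFrom J a (a :: L) := by
  obtain ⟨L, rfl⟩ := h.exists_eq_cons
  exact isMaxChainFrom_cons_cons.2 ⟨ha, hab, h⟩

theorem exists_isMaxChainFrom [WellFoundedLT α] [WellFoundedGT α] (htop : ⊤ ∈ J) (ha : a ∈ J) :
    ∃ L, IsMaxChainFrom J a L := by
  induction a using WellFoundedGT.induction with
  | _ a ih =>
  rcases eq_or_lt_of_le (le_top : a ≤ ⊤) with rfl | hlt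
  · exact ⟨[⊤], isMaxChainFrom_singleton.2 ⟨htop, rfl⟩⟩
  · obtain ⟨b, hbJ, hab⟩ := exists_covByIn_of_lt htop hlt
    obtain ⟨L, hL⟩ := ih b hab.1 hbJ
    exact ⟨a :: L, hL.cons ha hab⟩

theorem ChainStepFrom.cons (h : ChainStepFrom J b L M) (ha : a ∈ J) (hab : CovByIn J a b) :
    ChainStepFrom J a (a :: L) (a :: M) := by
  obtain ⟨hL, hM, hlen, j, hj, hjlen, heq⟩ := h
  refine ⟨hL.cons ha hab, hM.cons ha hab, by simp [hlen], j + 1, j.succ_pos,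
    by simpa using hjlen, ?_⟩
  rintro (_ | i) hi
  · rfl
  · exact heq i (by omega)

theorem Relation.ReflTransGen.chainStepFrom_cons
    (h : Relation.ReflTransGen (ChainStepFrom J b) L M) (ha : a ∈ J) (hab : CovByIn J a b) :
    Relation.ReflTransGen (ChainStepFrom J a) (a :: L) (a :: M) :=
  h.lift (a :: ·) fun _ _ hstep => hstep.cons ha hab

theorem chainStepFrom_replace_second {d : α} (hL : IsMaxChainFrom J a (a :: b :: d :: L))
    (hM : IsMaxChainFrom J a (a :: c :: d :: L)) :
    ChainStepFrom J a (a :: b :: d :: L) (a :: c :: d :: L) := by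
  refine ⟨hL, hM, rfl, 1, one_pos, by simp, ?_⟩
  rintro (_ | _ | i) hi
  · rfl
  · exact absurd rfl hi
  · rfl

end Chains

theorem IsMaxChainFrom.length_eq_and_reflTransGen [Lattice α] [OrderTop α] [IsModularLattice α]
    [WellFoundedLT α] [WellFoundedGT α] {J : Set α} {a : α} {L M : List α}
    (hinf : InfClosed J) (hsup : SupClosed J) (hL : IsMaxChainFrom J a L)
    (hM : IsMaxChainFrom J a M) :
    L.length = M.length ∧ Relation.ReflTransGen (ChainStepFrom J a) L M := by
  induction hn : L.length using Nat.strong_induction_on generalizing a L M with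
  | _ n ih =>
  subst hn
  by_cases ha : a = ⊤
  · subst ha
    rw [hL.eq_singleton_top, hM.eq_singleton_top]
    exact ⟨rfl, .refl⟩
  obtain ⟨b, L, rfl⟩ := hL.exists_eq_cons_cons ha
  obtain ⟨c, M, rfl⟩ := hM.exists_eq_cons_cons ha
  obtain ⟨haJ, hab, hbL⟩ := isMaxChainFrom_cons_cons.1 hL
  obtain ⟨-, hac, hcM⟩ := isMaxChainFrom_cons_cons.1 hM
  by_cases hbc : b = c
  · subst hbc
    obtain ⟨hlen, hrtg⟩ := ih _ (by simp) hbL hcM rfl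
    exact ⟨by simp [hlen], hrtg.chainStepFrom_cons haJ hab⟩
  have hbJ : b ∈ J := hbL.1 b List.mem_cons_self
  have hcJ : c ∈ J := hcM.1 c List.mem_cons_self
  obtain ⟨P, hP⟩ := exists_isMaxChainFrom hL.top_mem (hsup hbJ hcJ)
  have hbP := hP.cons hbJ (hab.sup hinf hac hcJ hbc)
  have hcP := hP.cons hcJ (sup_comm b c ▸ hac.sup hinf hab hbJ (Ne.symm hbc))
  obtain ⟨hlen₁, hrtg₁⟩ := ih _ (by simp) hbL hbP rfl
  obtain ⟨hlen₂, hrtg₂⟩ := ih _ (by simp_all) hcP hcM rfl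
  obtain ⟨d, P, rfl⟩ := hP.exists_eq_cons
  have hstep := chainStepFrom_replace_second (hbP.cons haJ hab) (hcP.cons haJ hac)
  exact ⟨by simp_all,
    (hrtg₁.chainStepFrom_cons haJ hab).trans (.head hstep (hrtg₂.chainStepFrom_cons haJ hac))⟩

end ModularChains

theorem maximal_chains_connected_general
    (I : Type*) [Group I] [Finite I] (hcyc : IsCyclic I)
    (Jset : Set (Subgroup I))
    (hinf : ∀ K₁ K₂ : Subgroup I, K₁ ∈ Jset → K₂ ∈ Jset → K₁ ⊓ K₂ ∈ Jset)
    (hsup : ∀ K₁ K₂ : Subgroup I, K₁ ∈ Jset → K₂ ∈ Jset → K₁ ⊔ K₂ ∈ Jset)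
    (LA LB : List (Subgroup I))
    (hA : IsMaxChainIn Jset LA) (hB : IsMaxChainIn Jset LB) :
    LA.length = LB.length ∧ Relation.ReflTransGen (ChainStep Jset) LA LB := by
  -- makes `Subgroup I` a modular lattice
  let _ := hcyc.commGroup
  exact IsMaxChainFrom.length_eq_and_reflTransGen (fun _ h₁ _ h₂ => hinf _ _ h₁ h₂)
    (fun _ h₁ _ h₂ => hsup _ _ h₁ h₂) hA hB

theorem maximal_chains_connected
    (I : Type*) [Group I] [Finite I] (hcyc : IsCyclic I)
    (Jset : Set (Subgroup I))
    (hbot : ⊥ ∈ Jset) (htop : ⊤ ∈ Jset)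
    (hinf : ∀ K₁ K₂ : Subgroup I, K₁ ∈ Jset → K₂ ∈ Jset → K₁ ⊓ K₂ ∈ Jset)
    (hsup : ∀ K₁ K₂ : Subgroup I, K₁ ∈ Jset → K₂ ∈ Jset → K₁ ⊔ K₂ ∈ Jset)
    (LA LB : List (Subgroup I))
    (hA : IsMaxChainIn Jset LA) (hB : IsMaxChainIn Jset LB) :
    LA.length = LB.length ∧ Relation.ReflTransGen (ChainStep Jset) LA LB :=
  maximal_chains_connected_general I hcyc Jset hinf hsup LA LB hA hB
end

section
/- If a, b ∈ ℂ[X] are nonconstant and satisfy a ∘ b = X^n, then k := deg a divides n and there is a linear ℓ ∈ ℂ[X] such that a = X^k ∘ ℓ and b = ℓ^{-1} ∘ X^{n/k}. If a, b ∈ ℂ[X] are nonconstant and satisfy a ∘ b = T_n, then k := deg a divides n and there is a linear ℓ ∈ ℂ[X] such that a = T_k ∘ ℓ and b = ℓ^{-1} ∘ T_{n/k}. -/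
/-!
If `a ∘ b = c ∘ d` with `deg a = deg c = k` and with `b`, `d` of degree `m` sharing their leading
coefficient, then `a` and `c` share their leading coefficient `α` as well, and
`α (b ^ k - d ^ k)` is a difference of two polynomials of degree `≤ (k - 1) m` (the lower parts of
`a ∘ b` and `c ∘ d`). But `b ^ k - d ^ k = (b - d) ∑ b ^ j d ^ (k - 1 - j)`, and in characteristic
zero the sum has degree exactly `(k - 1) m`, so `b - d` is constant. Hence two decompositions with
the same degrees differ by a linear change of variables, and `X ^ n`, `T_n` have the
decompositions `X ^ k ∘ X ^ (n / k)`, `T_k ∘ T_(n / k)` of every degree `k ∣ n`.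
-/

open Polynomial

/-- The normalized degree-`n` Chebyshev polynomial `T_n`, characterized by
`T_n(Y + 1/Y) = Y^n + 1/Y^n`; it is the Dickson polynomial `D_n(X, 1)`
of the first kind. -/
noncomputable def chebT (n : ℕ) : ℂ[X] :=
  Polynomial.dickson 1 (1 : ℂ) n

namespace Polynomial

section CommSemiring

variable {R : Type*} [CommSemiring R]

theorem coeff_geom_sum₂_of_natDegree_le {b d : R[X]} {m : ℕ} (hb : b.natDegree ≤ m)
    (hd : d.natDegree ≤ m) (hbd : d.coeff m = b.coeff m) (k : ℕ) :
    (∑ j ∈ Finset.range k, b ^ j * d ^ (k - 1 - j)).coeff ((k - 1) * m) =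
      k * b.coeff m ^ (k - 1) := by
  rw [finsetSum_coeff, Finset.sum_congr rfl (g := fun _ => b.coeff m ^ (k - 1)), Finset.sum_const,
    Finset.card_range, nsmul_eq_mul]
  intro j hj
  have hjk : j + (k - 1 - j) = k - 1 := by have := Finset.mem_range.mp hj; omega
  have hsplit : (k - 1) * m = j * m + (k - 1 - j) * m := by rw [← add_mul, hjk]
  rw [hsplit, coeff_mul_add_eq_of_natDegree_le (natDegree_pow_le_of_le j hb)
    (natDegree_pow_le_of_le _ hd), coeff_pow_of_natDegree_le hb, coeff_pow_of_natDegree_le hd,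
    hbd, ← pow_add, hjk]

end CommSemiring

section Ring

variable {R : Type*} [CommRing R]

theorem natDegree_comp_sub_C_mul_pow_le (a b : R[X]) :
    (a.comp b - C a.leadingCoeff * b ^ a.natDegree).natDegree ≤
      (a.natDegree - 1) * b.natDegree := by
  have : a.comp b - C a.leadingCoeff * b ^ a.natDegree = a.eraseLead.comp b := by
    rw [← self_sub_C_mul_X_pow, sub_comp, mul_comp, C_comp, X_pow_comp]
  rw [this]
  exact natDegree_comp_le.trans (Nat.mul_le_mul_right _ (eraseLead_natDegree_le a))

end Ring

section Domain

variable {R : Type*} [CommRing R] [IsDomain R]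

theorem eq_of_comp_eq_comp_of_natDegree_pos {p q r : R[X]} (hr : 0 < r.natDegree)
    (h : p.comp r = q.comp r) : p = q := by
  rw [← sub_eq_zero, ← sub_comp] at h
  rcases comp_eq_zero_iff.mp h with h | ⟨-, hr'⟩
  · exact sub_eq_zero.mp h
  · rw [hr', natDegree_C] at hr
    exact absurd hr (lt_irrefl 0)

variable [CharZero R]

theorem natDegree_sub_add_le_natDegree_pow_sub_pow {b d : R[X]} (hb : b ≠ 0)
    (hdeg : d.natDegree = b.natDegree) (hlc : d.leadingCoeff = b.leadingCoeff) (hbd : b ≠ d)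
    {k : ℕ} (hk : 0 < k) :
    (b - d).natDegree + (k - 1) * b.natDegree ≤ (b ^ k - d ^ k).natDegree := by
  have hG :
      (∑ j ∈ Finset.range k, b ^ j * d ^ (k - 1 - j)).coeff ((k - 1) * b.natDegree) ≠ 0 := by
    rw [coeff_geom_sum₂_of_natDegree_le le_rfl hdeg.le
      (by simpa only [leadingCoeff, hdeg] using hlc)]
    exact mul_ne_zero (Nat.cast_ne_zero.mpr hk.ne') (pow_ne_zero _ (leadingCoeff_ne_zero.mpr hb))
  rw [← geom_sum₂_mul, natDegree_mul (fun h => hG (by rw [h, coeff_zero])) (sub_ne_zero.mpr hbd),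
    add_comm]
  exact Nat.add_le_add_right (le_natDegree_of_ne_zero hG) _

theorem natDegree_sub_eq_zero_of_comp_eq_comp {a b c d : R[X]} (ha : 0 < a.natDegree)
    (hac : c.natDegree = a.natDegree) (hdeg : d.natDegree = b.natDegree)
    (hlc : d.leadingCoeff = b.leadingCoeff) (h : a.comp b = c.comp d) :
    (b - d).natDegree = 0 := by
  rcases Nat.eq_zero_or_pos b.natDegree with hb0 | hbpos
  · exact Nat.le_zero.mp (natDegree_sub_le_of_le hb0.le (hdeg.trans hb0).le)
  by_cases hbd : b = d
  · rw [hbd, sub_self, natDegree_zero]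
  have hb : b ≠ 0 := ne_zero_of_natDegree_gt hbpos
  set k := a.natDegree
  set α := a.leadingCoeff
  have hα : α ≠ 0 := leadingCoeff_ne_zero.mpr (ne_zero_of_natDegree_gt ha)
  have hcα : c.leadingCoeff = α := by
    have := congrArg leadingCoeff h
    rw [leadingCoeff_comp hbpos.ne', leadingCoeff_comp (hdeg ▸ hbpos.ne'), hlc, hac] at this
    exact (mul_right_cancel₀ (pow_ne_zero _ (leadingCoeff_ne_zero.mpr hb)) this).symm
  have hdiff : C α * (b ^ k - d ^ k) =
      (c.comp d - C c.leadingCoeff * d ^ c.natDegree) -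
        (a.comp b - C a.leadingCoeff * b ^ a.natDegree) := by
    rw [hcα, hac, ← h]; ring
  have hupper : (b ^ k - d ^ k).natDegree ≤ (k - 1) * b.natDegree := by
    rw [← natDegree_C_mul hα, hdiff]
    refine (natDegree_sub_le _ _).trans (max_le ?_ (natDegree_comp_sub_C_mul_pow_le a b))
    simpa only [hac, hdeg] using natDegree_comp_sub_C_mul_pow_le c d
  have := natDegree_sub_add_le_natDegree_pow_sub_pow hb hdeg hlc hbd ha
  omega

end Domain

section Field

variable {K : Type*} [Field K]

theorem C_mul_X_add_C_comp_C_inv_mul_X_sub_C {u : K} (hu : u ≠ 0) (t : K) :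
    (C u * X + C t).comp (C u⁻¹ * (X - C t)) = X := by
  simp only [add_comp, mul_comp, C_comp, X_comp, ← mul_assoc, ← C_mul, mul_inv_cancel₀ hu, C_1,
    one_mul, sub_add_cancel]

theorem C_inv_mul_X_sub_C_comp_C_mul_X_add_C {u : K} (hu : u ≠ 0) (t : K) :
    (C u⁻¹ * (X - C t)).comp (C u * X + C t) = X := by
  simp only [mul_comp, sub_comp, C_comp, X_comp, add_sub_cancel_right, ← mul_assoc, ← C_mul,
    inv_mul_cancel₀ hu, C_1, one_mul]

variable [CharZero K]

theorem exists_linear_of_comp_eq_comp {a b c d : K[X]} (ha : 0 < a.natDegree)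
    (hb : 0 < b.natDegree) (hac : c.natDegree = a.natDegree) (hbd : d.natDegree = b.natDegree)
    (h : a.comp b = c.comp d) :
    ∃ ℓ ℓinv : K[X], ℓ.natDegree = 1 ∧ ℓ.comp ℓinv = X ∧ ℓinv.comp ℓ = X ∧
      a = c.comp ℓ ∧ b = ℓinv.comp d := by
  have hd : d ≠ 0 := ne_zero_of_natDegree_gt (hbd ▸ hb)
  set u := b.leadingCoeff / d.leadingCoeff
  have hu : u ≠ 0 :=
    div_ne_zero (leadingCoeff_ne_zero.mpr (ne_zero_of_natDegree_gt hb))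
      (leadingCoeff_ne_zero.mpr hd)
  have hrescale : (c.comp (C u⁻¹ * X)).comp (C u * d) = c.comp d := by
    rw [comp_assoc, mul_comp, C_comp, X_comp, ← mul_assoc, ← C_mul, inv_mul_cancel₀ hu, C_1,
      one_mul]
  obtain ⟨t, ht⟩ : ∃ t, b - C u * d = C t := ⟨_, eq_C_of_natDegree_eq_zero <|
    natDegree_sub_eq_zero_of_comp_eq_comp ha
      (by rw [natDegree_comp, natDegree_C_mul_X _ (inv_ne_zero hu), mul_one, hac])
      (by rw [natDegree_C_mul hu, hbd])
      (by rw [leadingCoeff_C_mul_of_isUnit hu.isUnit,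
        div_mul_cancel₀ _ (leadingCoeff_ne_zero.mpr hd)])
      (h.trans hrescale.symm)⟩
  have hb_eq : b = (C u * X + C t).comp d := by
    rw [add_comp, mul_comp, C_comp, X_comp, C_comp, ← ht, add_sub_cancel]
  have hc_eq : c = a.comp (C u * X + C t) :=
    eq_of_comp_eq_comp_of_natDegree_pos (hbd ▸ hb) (by rw [comp_assoc, ← hb_eq, h])
  refine ⟨C u⁻¹ * (X - C t), C u * X + C t, ?_, C_inv_mul_X_sub_C_comp_C_mul_X_add_C hu t,
    C_mul_X_add_C_comp_C_inv_mul_X_sub_C hu t, ?_, hb_eq⟩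
  · rw [natDegree_C_mul (inv_ne_zero hu), natDegree_X_sub_C]
  · rw [hc_eq, comp_assoc, C_mul_X_add_C_comp_C_inv_mul_X_sub_C hu, comp_X]

theorem natDegree_dvd_and_exists_linear_of_comp_eq {P : ℕ → K[X]}
    (hdeg : ∀ n, (P n).natDegree = n) (hmul : ∀ m n, P (m * n) = (P m).comp (P n)) {n : ℕ}
    {a b : K[X]} (ha : 0 < a.natDegree) (hb : 0 < b.natDegree) (h : a.comp b = P n) :
    a.natDegree ∣ n ∧ ∃ ℓ ℓinv : K[X], ℓ.natDegree = 1 ∧ ℓ.comp ℓinv = X ∧ ℓinv.comp ℓ = X ∧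
      a = (P a.natDegree).comp ℓ ∧ b = ℓinv.comp (P (n / a.natDegree)) := by
  have hn : a.natDegree * b.natDegree = n := by rw [← hdeg n, ← h, natDegree_comp]
  refine ⟨Dvd.intro _ hn, ?_⟩
  rw [← hn, Nat.mul_div_cancel_left _ ha]
  exact exists_linear_of_comp_eq_comp ha hb (hdeg _) (hdeg _) (by rw [h, ← hmul, hn])

end Field

end Polynomial

theorem natDegree_chebT (n : ℕ) : (chebT n).natDegree = n := by
  rw [chebT, dickson_one_one_eq_chebyshev_T, ← C_ofNat, natDegree_C_mul two_ne_zero,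
    natDegree_comp, natDegree_C_mul_X _ (by simp), mul_one, Chebyshev.natDegree_T,
    Int.natAbs_natCast]

theorem decompositions_of_power_and_chebyshev :
    (∀ (n : ℕ) (a b : ℂ[X]), 0 < a.natDegree → 0 < b.natDegree →
      a.comp b = Polynomial.X ^ n →
      a.natDegree ∣ n ∧
        ∃ ℓ ℓinv : ℂ[X], ℓ.natDegree = 1 ∧
          ℓ.comp ℓinv = Polynomial.X ∧ ℓinv.comp ℓ = Polynomial.X ∧
          a = (Polynomial.X ^ a.natDegree).comp ℓ ∧
          b = ℓinv.comp (Polynomial.X ^ (n / a.natDegree))) ∧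
    (∀ (n : ℕ) (a b : ℂ[X]), 0 < a.natDegree → 0 < b.natDegree →
      a.comp b = chebT n →
      a.natDegree ∣ n ∧
        ∃ ℓ ℓinv : ℂ[X], ℓ.natDegree = 1 ∧
          ℓ.comp ℓinv = Polynomial.X ∧ ℓinv.comp ℓ = Polynomial.X ∧
          a = (chebT a.natDegree).comp ℓ ∧
          b = ℓinv.comp (chebT (n / a.natDegree))) :=
  ⟨fun _ _ _ => natDegree_dvd_and_exists_linear_of_comp_eq (P := (X ^ ·)) natDegree_X_pow
      (fun m n => by rw [pow_comp, X_comp, ← pow_mul, mul_comm]),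
    fun _ _ _ =>
      natDegree_dvd_and_exists_linear_of_comp_eq natDegree_chebT (dickson_one_one_mul ℂ)⟩
end

section
/- Let a, b, h ∈ ℂ[X] be nonconstant and let s, n be coprime positive integers. If a ∘ b = X^s·h(X)^n, then there exist integers j, k > 0, polynomials ĥ, h̃ ∈ ℂ[X], and a linear ℓ ∈ ℂ[X] such that a = X^j·ĥ(X)^n ∘ ℓ and b = ℓ^{-1} ∘ X^k·h̃(X)^n. If instead a ∘ b = X^s·h(X^n), then there exist integers j, k > 0, polynomials ĥ, h̃ ∈ ℂ[X], and a linear ℓ ∈ ℂ[X] such that a = X^j·ĥ(X^n) ∘ ℓ and b = ℓ^{-1} ∘ X^k·h̃(X^n). -/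
/-!
Write `m_x(p)` for the multiplicity of `x` as a root of `p`. For nonconstant `b`,
`m_x(a ∘ b) = m_{b x}(a) · m_x(b - b x)`.

First claim. Let `c = b 0`. At `x = 0` the identity reads `m_c(a) m_0(b - c) = s + n m_0(h)`, so
`m_c(a)` is prime to `n`; at `x ≠ 0` its right side is `n m_x(h)`. Hence `n ∣ m_x(b - c)` for
`x ≠ 0`, and `n ∣ m_ρ(a)` as soon as the fibre `b = ρ` has an unramified point. If `n ∤ m_ρ(a)` for
some `ρ ≠ c`, the fibres of `b` above `c` and `ρ` are ramified everywhere except possibly at `0`,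
against the Riemann–Hurwitz bound `deg b < #b⁻¹(c) + #b⁻¹(ρ)`. So away from `0` all multiplicities
of `a(X + c)` and of `b - c` are divisible by `n`, and both are `X^j` times an `n`-th power.

Second claim. For a primitive `n`-th root of unity `ζ`, `P = X^s h(X^n)` satisfies
`P(ζX) = ζ^s P`. Write `P = A ∘ B` with `A = a(X + c)`, `B = b - c`, `d = deg B`. Then `B(ζX)` and
`ζ^d B` have the same leading term, while `A ∘ B(ζX) - A ∘ (ζ^d B) = (ζ^s A - A(ζ^d X)) ∘ B` has
degree at most `(deg A - 1) d`; this forces `B(ζX) - ζ^d B` to be constant, hence zero as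
`B(0) = 0`, and then `A(ζ^d X) = ζ^s A`. A polynomial with `p(ωX) = μ p`, `ω` a primitive `n`-th
root of unity, has all its exponents in one class modulo `n`, so it is `X^j q(X^n)`; for `A` this
needs `ζ^d` primitive, which follows from `ζ^{d deg A} = ζ^s` and `gcd(s, n) = 1`.
-/

open Polynomial

theorem Nat.coprime_of_mul_modEq {a b s n : ℕ} (h : a * b ≡ s [MOD n]) (hs : s.Coprime n) :
    a.Coprime n :=
  Nat.Coprime.coprime_mul_right (h.gcd_eq.trans hs)

theorem IsPrimitiveRoot.pow_eq_pow_iff_modEq {M : Type*} [CommMonoid M] {ζ : M} {n : ℕ}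
    (hζ : IsPrimitiveRoot ζ n) (hn : n ≠ 0) {i k : ℕ} : ζ ^ i = ζ ^ k ↔ i ≡ k [MOD n] := by
  rw [hζ.eq_orderOf]
  exact (hζ.isOfFinOrder hn).pow_eq_pow_iff_modEq

namespace Polynomial

section CommRing

variable {R : Type*} [CommRing R]

theorem comp_sub_comp_eq_mul (a g₁ g₂ : R[X]) :
    a.comp g₁ - a.comp g₂ = (g₁ - g₂) * ∑ i ∈ Finset.range (a.natDegree + 1),
      C (a.coeff i) * ∑ t ∈ Finset.range i, g₁ ^ t * g₂ ^ (i - 1 - t) := by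
  simp only [comp, eval₂_eq_sum_range, ← Finset.sum_sub_distrib]
  rw [Finset.mul_sum]
  refine Finset.sum_congr rfl fun i _ => ?_
  rw [← mul_sub, ← geom_sum₂_mul]
  ring

theorem eval_eq_of_rootMultiplicity_sub_C_ne_zero {p : R[X]} {a x : R}
    (h : rootMultiplicity x (p - C a) ≠ 0) : p.eval x = a := by
  have := (rootMultiplicity_pos'.mp (Nat.pos_of_ne_zero h)).2
  rwa [IsRoot, eval_sub, eval_C, sub_eq_zero] at this

theorem dvd_rootMultiplicity_sub_C_eval_zero {a b : R[X]} {n : ℕ}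
    (hcop : (rootMultiplicity (b.eval 0) a).Coprime n)
    (hdvd : ∀ x ≠ 0, n ∣ rootMultiplicity (b.eval x) a * rootMultiplicity x (b - C (b.eval x)))
    {x : R} (hx : x ≠ 0) : n ∣ rootMultiplicity x (b - C (b.eval 0)) := by
  by_cases h0 : rootMultiplicity x (b - C (b.eval 0)) = 0
  · rw [h0]
    exact dvd_zero n
  · have := hdvd x hx
    rw [eval_eq_of_rootMultiplicity_sub_C_ne_zero h0] at this
    exact hcop.symm.dvd_of_dvd_mul_left this

theorem exists_eq_X_pow_mul_comp_X_pow {p : R[X]} {n j : ℕ} (hn : n ≠ 0)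
    (h : ∀ i, p.coeff i ≠ 0 → j ≤ i ∧ i ≡ j [MOD n]) : ∃ q : R[X], p = X ^ j * q.comp (X ^ n) := by
  obtain ⟨r, rfl⟩ : X ^ j ∣ p := X_pow_dvd_iff.mpr fun i hi => by_contra fun hpi => by
    have := (h i hpi).1; omega
  refine ⟨contract n r, congrArg _ ?_⟩
  rw [← expand_eq_comp_X_pow]
  ext i
  rw [coeff_expand (Nat.pos_of_ne_zero hn), coeff_contract hn]
  split_ifs with hi
  · rw [Nat.div_mul_cancel hi]
  · by_contra hri
    have := (h (i + j) (by rwa [coeff_X_pow_mul])).2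
    exact hi (Nat.modEq_zero_iff_dvd.mp (Nat.ModEq.add_right_cancel' j (by simpa using this)))

theorem X_pow_mul_comp_X_pow_comp_C_mul_X {ζ : R} {n : ℕ} (hζ : ζ ^ n = 1) (s : ℕ) (h : R[X]) :
    (X ^ s * h.comp (X ^ n)).comp (C ζ * X) = C (ζ ^ s) * (X ^ s * h.comp (X ^ n)) := by
  have : (X ^ n : R[X]).comp (C ζ * X) = X ^ n := by
    rw [X_pow_comp, mul_pow, ← C_pow, hζ, C_1, one_mul]
  rw [mul_comp, X_pow_comp, comp_assoc, this, mul_pow, C_pow]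
  ring

variable {g₁ g₂ : R[X]} {d : ℕ}

theorem natDegree_geom_sum₂_le (h₁ : g₁.natDegree ≤ d) (h₂ : g₂.natDegree ≤ d) (i : ℕ) :
    (∑ t ∈ Finset.range i, g₁ ^ t * g₂ ^ (i - 1 - t)).natDegree ≤ (i - 1) * d := by
  refine natDegree_sum_le_of_forall_le _ _ fun t ht => ?_
  have ht : t + (i - 1 - t) = i - 1 := by rw [Finset.mem_range] at ht; omega
  calc (g₁ ^ t * g₂ ^ (i - 1 - t)).natDegree ≤ t * d + (i - 1 - t) * d :=
        natDegree_mul_le_of_le (natDegree_pow_le_of_le t h₁) (natDegree_pow_le_of_le _ h₂)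
    _ = (i - 1) * d := by rw [← add_mul, ht]

theorem coeff_geom_sum₂ (h₁ : g₁.natDegree ≤ d) (h₂ : g₂.natDegree ≤ d)
    (hc : g₁.coeff d = g₂.coeff d) (i : ℕ) :
    (∑ t ∈ Finset.range i, g₁ ^ t * g₂ ^ (i - 1 - t)).coeff ((i - 1) * d) =
      i * g₁.coeff d ^ (i - 1) := by
  have hterm : ∀ t ∈ Finset.range i,
      (g₁ ^ t * g₂ ^ (i - 1 - t)).coeff ((i - 1) * d) = g₁.coeff d ^ (i - 1) := by
    intro t ht
    have ht : t + (i - 1 - t) = i - 1 := by rw [Finset.mem_range] at ht; omega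
    rw [← congrArg (· * d) ht, add_mul, coeff_mul_add_eq_of_natDegree_le
      (natDegree_pow_le_of_le t h₁) (natDegree_pow_le_of_le _ h₂), coeff_pow_of_natDegree_le h₁,
      coeff_pow_of_natDegree_le h₂, ← hc, ← pow_add, ht]
  rw [finsetSum_coeff, Finset.sum_congr rfl hterm, Finset.sum_const, Finset.card_range,
    nsmul_eq_mul]

end CommRing

section Domain

variable {R : Type*} [CommRing R] [IsDomain R]

theorem rootMultiplicity_pow (p : R[X]) (n : ℕ) (x : R) :
    rootMultiplicity x (p ^ n) = n * rootMultiplicity x p := by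
  classical
  rw [← count_roots, roots_pow, Multiset.count_nsmul, count_roots]

theorem rootMultiplicity_comp {p q : R[X]} (hp : p ≠ 0) (hq : q.natDegree ≠ 0) (x : R) :
    rootMultiplicity x (p.comp q) =
      rootMultiplicity (q.eval x) p * rootMultiplicity x (q - C (q.eval x)) := by
  obtain ⟨g, hfac, hg⟩ := p.exists_eq_pow_rootMultiplicity_mul_and_not_dvd hp (q.eval x)
  have hqx : q - C (q.eval x) ≠ 0 := fun h0 => hq (by rw [← natDegree_sub_C, h0, natDegree_zero])
  have hgq : g.comp q ≠ 0 := by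
    rw [Ne, comp_eq_zero_iff, not_or, not_and_or]
    exact ⟨by rintro rfl; exact hg (dvd_zero _), Or.inr fun h => hq (by rw [h, natDegree_C])⟩
  have hgx : ¬ (g.comp q).IsRoot x := by
    rwa [IsRoot, eval_comp, ← IsRoot, ← dvd_iff_isRoot]
  conv_lhs => rw [hfac, mul_comp, pow_comp, sub_comp, X_comp, C_comp]
  rw [rootMultiplicity_mul (mul_ne_zero (pow_ne_zero _ hqx) hgq), rootMultiplicity_pow,
    rootMultiplicity_eq_zero hgx, add_zero, mul_comm]

theorem sum_rootMultiplicity_le_natDegree (p : R[X]) (T : Finset R) :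
    ∑ x ∈ T, rootMultiplicity x p ≤ p.natDegree := by
  classical
  calc ∑ x ∈ T, rootMultiplicity x p = ∑ x ∈ T, p.roots.count x := by simp only [count_roots]
    _ ≤ ∑ x ∈ T ∪ p.roots.toFinset, p.roots.count x :=
        Finset.sum_le_sum_of_subset Finset.subset_union_left
    _ = Multiset.card p.roots := Multiset.sum_count_eq_card fun x hx => by simp [hx]
    _ ≤ p.natDegree := card_roots' p

theorem two_mul_card_roots_toFinset_le [DecidableEq R] (p : R[X]) (S : Finset R)
    (h : ∀ x ∉ S, rootMultiplicity x p ≠ 1) :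
    2 * p.roots.toFinset.card ≤ p.natDegree + S.card := by
  calc 2 * p.roots.toFinset.card = ∑ x ∈ p.roots.toFinset, 2 := by
        rw [Finset.sum_const, smul_eq_mul, mul_comm]
    _ ≤ ∑ x ∈ p.roots.toFinset, (p.roots.count x + if x ∈ S then 1 else 0) :=
        Finset.sum_le_sum fun x hx => by
          have := Multiset.one_le_count_iff_mem.mpr (Multiset.mem_toFinset.mp hx)
          by_cases hS : x ∈ S
          · rw [if_pos hS]
            omega
          · have := count_roots (a := x) p ▸ h x hS
            rw [if_neg hS]
            omega
    _ = Multiset.card p.roots + (p.roots.toFinset ∩ S).card := by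
        rw [Finset.sum_add_distrib, Multiset.toFinset_sum_count_eq, Finset.sum_ite_mem,
          Finset.sum_const, smul_eq_mul, mul_one]
    _ ≤ p.natDegree + S.card :=
        add_le_add (card_roots' p) (Finset.card_le_card Finset.inter_subset_right)

theorem rootMultiplicity_comp_X_add_C (p : R[X]) (c x : R) :
    rootMultiplicity x (p.comp (X + C c)) = rootMultiplicity (x + c) p := by
  rcases eq_or_ne p 0 with rfl | hp
  · simp
  rw [rootMultiplicity_comp hp (by rw [natDegree_X_add_C]; exact one_ne_zero), eval_add, eval_X,
    eval_C, show (X + C c - C (x + c) : R[X]) = X - C x by rw [C_add]; ring,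
    rootMultiplicity_X_sub_C_self, mul_one]

theorem eq_of_comp_eq_comp {p q B : R[X]} (hB : B.natDegree ≠ 0) (h : p.comp B = q.comp B) :
    p = q := by
  have : (p - q).comp B = 0 := by rw [sub_comp, h, sub_self]
  rw [comp_eq_zero_iff] at this
  rcases this with h0 | ⟨-, hBC⟩
  · exact sub_eq_zero.mp h0
  · exact absurd (by rw [hBC, natDegree_C]) hB

theorem pow_eq_of_comp_C_mul_X_eq {p : R[X]} {ω μ : R} (h : p.comp (C ω * X) = C μ * p) {i : ℕ}
    (hi : p.coeff i ≠ 0) : ω ^ i = μ := by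
  have := congrArg (coeff · i) h
  simp only [comp_C_mul_X_coeff, coeff_C_mul] at this
  exact mul_left_cancel₀ hi (this.trans (mul_comm _ _))

theorem exists_eq_X_pow_mul_comp_X_pow_of_comp_C_mul_X_eq {ω μ : R} {n : ℕ}
    (hω : IsPrimitiveRoot ω n) (hn : n ≠ 0) {p : R[X]} (hp : p ≠ 0) (hp0 : p.coeff 0 = 0)
    (h : p.comp (C ω * X) = C μ * p) :
    ∃ j, 0 < j ∧ ∃ q : R[X], p = X ^ j * q.comp (X ^ n) := by
  have htr : p.coeff p.natTrailingDegree ≠ 0 := trailingCoeff_nonzero_iff_nonzero.mpr hp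
  refine ⟨p.natTrailingDegree, Nat.pos_of_ne_zero fun h0 => htr (h0 ▸ hp0),
    exists_eq_X_pow_mul_comp_X_pow hn fun i hi => ⟨natTrailingDegree_le_of_ne_zero hi, ?_⟩⟩
  exact (hω.pow_eq_pow_iff_modEq hn).mp
    ((pow_eq_of_comp_C_mul_X_eq h hi).trans (pow_eq_of_comp_C_mul_X_eq h htr).symm)

end Domain

section CharZero

variable {R : Type*} [CommRing R] [IsDomain R] [CharZero R]

/-- `a ∘ g₁ - a ∘ g₂ = (g₁ - g₂) W`, where `W` has the nonzero coefficient
`lc a · deg a · lc g₁ ^ (deg a - 1)` in degree `(deg a - 1) d`. -/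
theorem natDegree_sub_eq_zero_of_natDegree_comp_sub_comp_le {a g₁ g₂ : R[X]} {d : ℕ}
    (hd : d ≠ 0) (ha : a.natDegree ≠ 0) (h₁ : g₁.natDegree = d) (h₂ : g₂.natDegree ≤ d)
    (hc : g₁.coeff d = g₂.coeff d)
    (h : (a.comp g₁ - a.comp g₂).natDegree ≤ (a.natDegree - 1) * d) :
    (g₁ - g₂).natDegree = 0 := by
  set m := a.natDegree
  set W := ∑ i ∈ Finset.range (m + 1),
    C (a.coeff i) * ∑ t ∈ Finset.range i, g₁ ^ t * g₂ ^ (i - 1 - t)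
  have hW : W.coeff ((m - 1) * d) = a.coeff m * (m * g₁.coeff d ^ (m - 1)) := by
    rw [finsetSum_coeff, Finset.sum_range_succ, coeff_C_mul,
      coeff_geom_sum₂ h₁.le h₂ hc, Finset.sum_eq_zero, zero_add]
    intro i hi
    rw [Finset.mem_range] at hi
    rw [coeff_C_mul]
    rcases Nat.eq_zero_or_pos i with rfl | hi0
    · simp
    · refine mul_eq_zero_of_right _ (coeff_eq_zero_of_natDegree_lt ?_)
      calc _ ≤ (i - 1) * d := natDegree_geom_sum₂_le h₁.le h₂ i
        _ < (m - 1) * d := Nat.mul_lt_mul_of_pos_right (by omega) (Nat.pos_of_ne_zero hd)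
  have hW0 : W.coeff ((m - 1) * d) ≠ 0 := by
    have hlead : g₁.coeff d ≠ 0 := by
      rw [← h₁]
      exact leadingCoeff_ne_zero.mpr (ne_zero_of_natDegree_gt (n := 0) (by omega))
    rw [hW]
    exact mul_ne_zero (leadingCoeff_ne_zero.mpr (ne_zero_of_natDegree_gt (n := 0) (by omega)))
      (mul_ne_zero (Nat.cast_ne_zero.mpr ha) (pow_ne_zero _ hlead))
  by_contra hδ
  have hδ0 : g₁ - g₂ ≠ 0 := by rintro h0; simp [h0] at hδ
  have hW0' : W ≠ 0 := fun h0 => hW0 (by rw [h0, coeff_zero])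
  rw [comp_sub_comp_eq_mul, natDegree_mul hδ0 hW0'] at h
  have := le_natDegree_of_ne_zero hW0
  omega

theorem comp_C_mul_X_eq_of_comp_comp_C_mul_X_eq {A B : R[X]} {ζ μ : R} (hζ : ζ ≠ 0)
    (hA : A.natDegree ≠ 0) (hB : B.natDegree ≠ 0) (hB0 : B.coeff 0 = 0)
    (h : (A.comp B).comp (C ζ * X) = C μ * A.comp B) :
    B.comp (C ζ * X) = C (ζ ^ B.natDegree) * B := by
  set m := A.natDegree
  set d := B.natDegree
  have hμ : (ζ ^ d) ^ m = μ := by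
    rw [← pow_mul, mul_comm, ← natDegree_comp]
    refine pow_eq_of_comp_C_mul_X_eq h (leadingCoeff_ne_zero.mpr ?_)
    exact ne_zero_of_natDegree_gt (n := 0) (by rw [natDegree_comp]; positivity)
  set E := C μ * A - A.comp (C (ζ ^ d) * X)
  have hE : E.natDegree ≤ m - 1 := by
    refine natDegree_le_pred ((natDegree_sub_le_iff_left ?_).mpr (natDegree_C_mul_le _ _)) ?_
    · rw [natDegree_comp, natDegree_C_mul_X _ (pow_ne_zero _ hζ), mul_one]
    · rw [coeff_sub, coeff_C_mul, comp_C_mul_X_coeff, hμ, mul_comm, sub_self]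
  have hsplit : A.comp (B.comp (C ζ * X)) - A.comp (C (ζ ^ d) * B) = E.comp B := by
    rw [← comp_assoc, h, sub_comp, mul_comp, C_comp, comp_assoc, mul_comp, C_comp, X_comp]
  have hδ := natDegree_sub_eq_zero_of_natDegree_comp_sub_comp_le hB hA
    (g₁ := B.comp (C ζ * X)) (g₂ := C (ζ ^ d) * B)
    (by rw [natDegree_comp, natDegree_C_mul_X _ hζ, mul_one]) (natDegree_C_mul_le _ _)
    (by rw [comp_C_mul_X_coeff, coeff_C_mul, mul_comm])
    (by rw [hsplit]; exact natDegree_comp_le.trans (Nat.mul_le_mul_right _ hE))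
  rw [← sub_eq_zero, eq_C_of_natDegree_eq_zero hδ, coeff_sub, comp_C_mul_X_coeff, coeff_C_mul,
    hB0, zero_mul, mul_zero, sub_zero, C_0]

theorem exists_eq_X_pow_mul_comp_X_pow_of_comp_comp_C_mul_X_eq {ζ : R} {n : ℕ}
    (hζ : IsPrimitiveRoot ζ n) (hn : n ≠ 0) {A B : R[X]} {s : ℕ} (hcop : s.Coprime n)
    (hA : A.natDegree ≠ 0) (hB : B.natDegree ≠ 0) (hA0 : A.coeff 0 = 0) (hB0 : B.coeff 0 = 0)
    (h : (A.comp B).comp (C ζ * X) = C (ζ ^ s) * A.comp B) :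
    ∃ j k : ℕ, ∃ q r : R[X], 0 < j ∧ 0 < k ∧
      A = X ^ j * q.comp (X ^ n) ∧ B = X ^ k * r.comp (X ^ n) := by
  have hBζ := comp_C_mul_X_eq_of_comp_comp_C_mul_X_eq (hζ.ne_zero hn) hA hB hB0 h
  have hAζ : A.comp (C (ζ ^ B.natDegree) * X) = C (ζ ^ s) * A := by
    refine eq_of_comp_eq_comp hB ?_
    rw [comp_assoc, mul_comp, C_comp, X_comp, ← hBζ, ← comp_assoc, h, mul_comp, C_comp]
  have hA' : A ≠ 0 := by rintro rfl; simp at hA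
  have hB' : B ≠ 0 := by rintro rfl; simp at hB
  have hcopd : B.natDegree.Coprime n := by
    refine Nat.coprime_of_mul_modEq (b := A.natDegree) ((hζ.pow_eq_pow_iff_modEq hn).mp ?_) hcop
    rw [pow_mul]
    exact pow_eq_of_comp_C_mul_X_eq hAζ (leadingCoeff_ne_zero.mpr hA')
  obtain ⟨j, hj, q, hAq⟩ := exists_eq_X_pow_mul_comp_X_pow_of_comp_C_mul_X_eq
    (hζ.pow_of_coprime _ hcopd) hn hA' hA0 hAζ
  obtain ⟨k, hk, r, hBr⟩ := exists_eq_X_pow_mul_comp_X_pow_of_comp_C_mul_X_eq hζ hn hB' hB0 hBζ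
  exact ⟨j, k, q, r, hj, hk, hAq, hBr⟩

theorem exists_eq_comp_of_comp_eq_X_pow_mul_comp_X_pow {ζ : R} {n : ℕ}
    (hζ : IsPrimitiveRoot ζ n) (hn : n ≠ 0) {a b h : R[X]} {s : ℕ} (ha : a.natDegree ≠ 0)
    (hb : b.natDegree ≠ 0) (hs : s ≠ 0) (hcop : s.Coprime n)
    (H : a.comp b = X ^ s * h.comp (X ^ n)) :
    ∃ j k : ℕ, ∃ hhat htil : R[X], 0 < j ∧ 0 < k ∧
      a = (X ^ j * hhat.comp (X ^ n)).comp (X - C (b.eval 0)) ∧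
      b = X ^ k * htil.comp (X ^ n) + C (b.eval 0) := by
  set c := b.eval 0
  set A := a.comp (X + C c)
  set B := b - C c
  have hAa : A.comp (X - C c) = a := by simp [A, comp_assoc]
  have hAB : A.comp B = a.comp b := by simp [A, B, comp_assoc]
  have hB0 : B.coeff 0 = 0 := by simp [B, c, coeff_zero_eq_eval_zero]
  have hA0 : A.coeff 0 = 0 := by
    have := congrArg (eval 0) hAB
    rw [eval_comp, ← coeff_zero_eq_eval_zero, hB0, H] at this
    simpa [hs, coeff_zero_eq_eval_zero] using this
  obtain ⟨j, k, hhat, htil, hj, hk, hAdec, hBdec⟩ :=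
    exists_eq_X_pow_mul_comp_X_pow_of_comp_comp_C_mul_X_eq hζ hn hcop
      (by simpa [A, natDegree_comp] using ha) (by simpa [B, natDegree_sub_C] using hb) hA0 hB0
      (by rw [hAB, H, X_pow_mul_comp_X_pow_comp_C_mul_X hζ.pow_eq_one])
  exact ⟨j, k, hhat, htil, hj, hk, by rw [← hAdec, hAa], by rw [← hBdec, sub_add_cancel]⟩

end CharZero

section IsAlgClosed

variable {K : Type*} [Field K] [IsAlgClosed K]

theorem exists_eq_pow_of_dvd_rootMultiplicity {p : K[X]} {n : ℕ} (hn : n ≠ 0)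
    (h : ∀ x, n ∣ rootMultiplicity x p) : ∃ q, p = q ^ n := by
  classical
  obtain ⟨β, hβ⟩ := IsAlgClosed.exists_pow_nat_eq p.leadingCoeff (Nat.pos_of_ne_zero hn)
  set M := ∑ x ∈ p.roots.toFinset, (p.roots.count x / n) • ({x} : Multiset K)
  have hM : p.roots = n • M := by
    conv_lhs => rw [← Multiset.toFinset_sum_count_nsmul_eq p.roots]
    rw [Finset.smul_sum]
    refine Finset.sum_congr rfl fun x _ => ?_
    rw [smul_smul, Nat.mul_div_cancel' (count_roots p ▸ h x)]
  refine ⟨C β * (M.map fun x => X - C x).prod, ?_⟩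
  conv_lhs =>
    rw [← C_leadingCoeff_mul_prod_multiset_X_sub_C (p := p) IsAlgClosed.card_roots_eq_natDegree]
  rw [hM, Multiset.map_nsmul, Multiset.prod_nsmul, mul_pow, ← C_pow, hβ]

theorem exists_eq_X_pow_mul_pow {p : K[X]} (hp : p ≠ 0) {n : ℕ} (hn : n ≠ 0)
    (h : ∀ x ≠ 0, n ∣ rootMultiplicity x p) : ∃ q, p = X ^ rootMultiplicity 0 p * q ^ n := by
  obtain ⟨r, hpr, hr⟩ := p.exists_eq_pow_rootMultiplicity_mul_and_not_dvd hp 0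
  rw [C_0, sub_zero] at hpr hr
  obtain ⟨q, rfl⟩ : ∃ q, r = q ^ n := by
    refine exists_eq_pow_of_dvd_rootMultiplicity hn fun x => ?_
    by_cases hx : x = 0
    · rw [hx, rootMultiplicity_eq_zero (by rwa [IsRoot, ← coeff_zero_eq_eval_zero, ← X_dvd_iff])]
      exact dvd_zero n
    · have := h x hx
      rwa [hpr, rootMultiplicity_mul (hpr ▸ hp),
        rootMultiplicity_eq_zero (by rw [IsRoot, eval_pow, eval_X]; exact pow_ne_zero _ hx),
        zero_add] at this
  exact ⟨q, hpr⟩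

variable [CharZero K]

theorem natDegree_le_card_roots_toFinset_add_sum_rootMultiplicity_derivative [DecidableEq K]
    (p : K[X]) :
    p.natDegree ≤
      p.roots.toFinset.card + ∑ x ∈ p.roots.toFinset, rootMultiplicity x (derivative p) := by
  calc p.natDegree = ∑ x ∈ p.roots.toFinset, p.roots.count x := by
        rw [Multiset.toFinset_sum_count_eq, IsAlgClosed.card_roots_eq_natDegree]
    _ ≤ ∑ x ∈ p.roots.toFinset, (1 + rootMultiplicity x (derivative p)) :=
        Finset.sum_le_sum fun x _ => by
          have := rootMultiplicity_sub_one_le_derivative_rootMultiplicity p x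
          rw [count_roots]
          omega
    _ = _ := by rw [Finset.sum_add_distrib, Finset.sum_const, smul_eq_mul, mul_one]

/-- Riemann–Hurwitz: the ramification of `b` above `ρ₀` and `ρ₁`, counted by `b'`, is at most
`deg b' = deg b - 1`. -/
theorem natDegree_lt_card_roots_toFinset_sub_C_add [DecidableEq K] {b : K[X]}
    (hb : b.natDegree ≠ 0) {ρ₀ ρ₁ : K} (hρ : ρ₀ ≠ ρ₁) :
    b.natDegree < (b - C ρ₀).roots.toFinset.card + (b - C ρ₁).roots.toFinset.card := by
  have hdisj : Disjoint (b - C ρ₀).roots.toFinset (b - C ρ₁).roots.toFinset := by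
    have hdeg : 0 < b.degree := natDegree_pos_iff_degree_pos.mp (Nat.pos_of_ne_zero hb)
    simp only [Finset.disjoint_left, Multiset.mem_toFinset, mem_roots_sub_C hdeg]
    rintro x rfl
    exact hρ
  have h₀ := natDegree_le_card_roots_toFinset_add_sum_rootMultiplicity_derivative (b - C ρ₀)
  have h₁ := natDegree_le_card_roots_toFinset_add_sum_rootMultiplicity_derivative (b - C ρ₁)
  have hb' := sum_rootMultiplicity_le_natDegree (derivative b)
    ((b - C ρ₀).roots.toFinset ∪ (b - C ρ₁).roots.toFinset)
  rw [Finset.sum_union hdisj] at hb'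
  have := natDegree_derivative_lt hb
  simp only [natDegree_sub_C, derivative_sub, derivative_C, sub_zero] at h₀ h₁
  omega

theorem dvd_rootMultiplicity_of_ne_eval_zero {a b : K[X]} {n : ℕ}
    (hcop : (rootMultiplicity (b.eval 0) a).Coprime n)
    (hdvd : ∀ x ≠ 0, n ∣ rootMultiplicity (b.eval x) a * rootMultiplicity x (b - C (b.eval x)))
    (hb : b.natDegree ≠ 0) {ρ : K} (hρ : ρ ≠ b.eval 0) : n ∣ rootMultiplicity ρ a := by
  classical
  by_contra hnd
  have h₀ : ∀ x ∉ ({0} : Finset K), rootMultiplicity x (b - C (b.eval 0)) ≠ 1 := by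
    intro x hx h1
    have := dvd_rootMultiplicity_sub_C_eval_zero hcop hdvd (Finset.notMem_singleton.mp hx)
    rw [h1, Nat.dvd_one] at this
    exact hnd (this ▸ one_dvd _)
  have h₁ : ∀ x ∉ (∅ : Finset K), rootMultiplicity x (b - C ρ) ≠ 1 := by
    intro x _ h1
    have hbx := eval_eq_of_rootMultiplicity_sub_C_ne_zero (h1 ▸ one_ne_zero)
    have := hdvd x (by rintro rfl; exact hρ hbx.symm)
    rw [hbx, h1, mul_one] at this
    exact hnd this
  have hc₀ := two_mul_card_roots_toFinset_le _ _ h₀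
  have hc₁ := two_mul_card_roots_toFinset_le _ _ h₁
  have hRH := natDegree_lt_card_roots_toFinset_sub_C_add hb hρ.symm
  simp only [natDegree_sub_C, Finset.card_singleton, Finset.card_empty] at hc₀ hc₁
  omega

theorem exists_eq_comp_of_coprime_of_dvd {a b : K[X]} {n : ℕ} (ha : a ≠ 0)
    (hb : b.natDegree ≠ 0) (hn : n ≠ 0) (hroot : a.IsRoot (b.eval 0))
    (hcop : (rootMultiplicity (b.eval 0) a).Coprime n)
    (hdvd : ∀ x ≠ 0, n ∣ rootMultiplicity (b.eval x) a * rootMultiplicity x (b - C (b.eval x))) :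
    ∃ j k : ℕ, ∃ hhat htil : K[X], 0 < j ∧ 0 < k ∧
      a = (X ^ j * hhat ^ n).comp (X - C (b.eval 0)) ∧ b = X ^ k * htil ^ n + C (b.eval 0) := by
  set c := b.eval 0
  set A := a.comp (X + C c)
  have hAa : A.comp (X - C c) = a := by simp [A, comp_assoc]
  have hA0 : A ≠ 0 := by rintro h0; simp [← hAa, h0] at ha
  have hB0 : b - C c ≠ 0 := fun h0 => hb (by rw [← natDegree_sub_C (a := c), h0, natDegree_zero])
  obtain ⟨hhat, hAdec⟩ := exists_eq_X_pow_mul_pow hA0 hn fun x hx => by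
    rw [rootMultiplicity_comp_X_add_C]
    exact dvd_rootMultiplicity_of_ne_eval_zero hcop hdvd hb fun h => hx (add_eq_right.mp h)
  obtain ⟨htil, hBdec⟩ := exists_eq_X_pow_mul_pow hB0 hn fun x hx =>
    dvd_rootMultiplicity_sub_C_eval_zero hcop hdvd hx
  refine ⟨_, _, hhat, htil, ?_, ?_, by rw [← hAdec, hAa], by rw [← hBdec, sub_add_cancel]⟩
  · rwa [rootMultiplicity_comp_X_add_C, zero_add, rootMultiplicity_pos ha]
  · rw [rootMultiplicity_pos hB0]
    simp [c]

theorem exists_eq_comp_of_comp_eq_X_pow_mul_pow {a b h : K[X]} {s n : ℕ} (hb : b.natDegree ≠ 0)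
    (hh : h ≠ 0) (hs : s ≠ 0) (hn : n ≠ 0) (hcop : s.Coprime n) (H : a.comp b = X ^ s * h ^ n) :
    ∃ j k : ℕ, ∃ hhat htil : K[X], 0 < j ∧ 0 < k ∧
      a = (X ^ j * hhat ^ n).comp (X - C (b.eval 0)) ∧ b = X ^ k * htil ^ n + C (b.eval 0) := by
  have ha : a ≠ 0 := by
    rintro rfl
    simp [hh] at H
  have hmul : ∀ x, rootMultiplicity (b.eval x) a * rootMultiplicity x (b - C (b.eval x)) =
      s * rootMultiplicity x X + n * rootMultiplicity x h := by
    intro x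
    rw [← rootMultiplicity_comp ha hb, H, rootMultiplicity_mul (by simp [hh]),
      rootMultiplicity_pow, rootMultiplicity_pow]
  refine exists_eq_comp_of_coprime_of_dvd ha hb hn ?_ ?_ fun x hx => ⟨rootMultiplicity x h, ?_⟩
  · simpa [IsRoot, hs] using congrArg (eval 0) H
  · refine Nat.coprime_of_mul_modEq (b := rootMultiplicity 0 (b - C (b.eval 0))) ?_ hcop
    rw [hmul 0, show rootMultiplicity 0 (X : K[X]) = 1 by
      simpa using rootMultiplicity_X_sub_C_self (x := (0 : K)), mul_one]
    exact (Nat.modEq_iff_dvd' (by omega) |>.mpr (by simp)).symm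
  · rw [hmul x, rootMultiplicity_eq_zero (by rwa [IsRoot, eval_X]), mul_zero, zero_add]

end IsAlgClosed

end Polynomial

theorem decompositions_of_twisted_powers
    (a b h : ℂ[X])
    (ha : 0 < a.natDegree) (hb : 0 < b.natDegree) (hh : 0 < h.natDegree)
    (s n : ℕ) (hs : 0 < s) (hn : 0 < n) (hcop : Nat.Coprime s n) :
    (a.comp b = Polynomial.X ^ s * h ^ n →
      ∃ (j k : ℕ) (hhat htil ℓ ℓinv : ℂ[X]),
        0 < j ∧ 0 < k ∧ ℓ.natDegree = 1 ∧
        ℓ.comp ℓinv = Polynomial.X ∧ ℓinv.comp ℓ = Polynomial.X ∧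
        a = (Polynomial.X ^ j * hhat ^ n).comp ℓ ∧
        b = ℓinv.comp (Polynomial.X ^ k * htil ^ n)) ∧
    (a.comp b = Polynomial.X ^ s * h.comp (Polynomial.X ^ n) →
      ∃ (j k : ℕ) (hhat htil ℓ ℓinv : ℂ[X]),
        0 < j ∧ 0 < k ∧ ℓ.natDegree = 1 ∧
        ℓ.comp ℓinv = Polynomial.X ∧ ℓinv.comp ℓ = Polynomial.X ∧
        a = (Polynomial.X ^ j * hhat.comp (Polynomial.X ^ n)).comp ℓ ∧
        b = ℓinv.comp (Polynomial.X ^ k * htil.comp (Polynomial.X ^ n))) := by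
  set c := b.eval 0
  have hℓ : (X - C c).comp (X + C c) = X ∧ (X + C c).comp (X - C c) = X := by simp
  refine ⟨fun H => ?_, fun H => ?_⟩
  · obtain ⟨j, k, hhat, htil, hj, hk, ha', hb'⟩ := exists_eq_comp_of_comp_eq_X_pow_mul_pow
      hb.ne' (ne_zero_of_natDegree_gt hh) hs.ne' hn.ne' hcop H
    exact ⟨j, k, hhat, htil, X - C c, X + C c, hj, hk, natDegree_X_sub_C c, hℓ.1, hℓ.2, ha',
      by rw [add_comp, X_comp, C_comp, ← hb']⟩
  · obtain ⟨j, k, hhat, htil, hj, hk, ha', hb'⟩ := exists_eq_comp_of_comp_eq_X_pow_mul_comp_X_pow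
      (Complex.isPrimitiveRoot_exp n hn.ne') hn.ne' ha.ne' hb.ne' hs.ne' hcop H
    exact ⟨j, k, hhat, htil, X - C c, X + C c, hj, hk, natDegree_X_sub_C c, hℓ.1, hℓ.2, ha',
      by rw [add_comp, X_comp, C_comp, ← hb']⟩
end
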